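/- Let ε > 0 and let G be the unit distance graph on the strip ℝ × [0,ε] ⊂ ℝ². There exists a constant c = c(ε) > 0 such that for all points a, b in the strip with ||a - b|| > c, the graph distance between a and b in G equals ⌈||a - b||⌉. In particular, G is connected. -/

import Mathlib

noncomputable section

/-- The strip `ℝ × [0, ε]` as a subset of the Euclidean plane; coordinate `0` is the
horizontal coordinate and coordinate `1` is the vertical coordinate. -/
def Strip (ε : ℝ) : Set (EuclideanSpace ℝ (Fin 2)) := {p | p 1 ∈ Set.Icc 0 ε}

/-- The unit distance graph of the strip: two points are adjacent iff their Euclidean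
distance is exactly `1`. -/
def stripGraph (ε : ℝ) : SimpleGraph (Strip ε) where
  Adj x y := dist x.1 y.1 = 1
  symm := ⟨fun (x y : Strip ε) (h : dist x.1 y.1 = 1) => show dist y.1 x.1 = 1 by rw [dist_comm]; exact h⟩
  loopless := ⟨fun x (h : dist x.1 x.1 = 1) => by simp at h⟩

/-- `v` lies strictly between `u` and `w` (in either order). -/
def StrictBetween (u v w : ℝ) : Prop := (u < v ∧ v < w) ∨ (w < v ∧ v < u)

open Real Set

namespace StripAux

def clampE (ε u : ℝ) : ℝ := max 0 (min u ε)

lemma clampE_mem {ε : ℝ} (hε : 0 ≤ ε) (u : ℝ) : clampE ε u ∈ Icc 0 ε :=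
  ⟨le_max_left _ _, max_le hε (min_le_right _ _)⟩

lemma clampE_eq_self {ε u : ℝ} (h : u ∈ Icc 0 ε) : clampE ε u = u := by
  unfold clampE
  rw [min_eq_left h.2, max_eq_right h.1]

lemma clampE_lip (ε u v : ℝ) : |clampE ε u - clampE ε v| ≤ |u - v| := by
  unfold clampE
  rw [max_comm 0 (min u ε), max_comm 0 (min v ε)]
  calc |max (min u ε) 0 - max (min v ε) 0| ≤ |min u ε - min v ε| :=
        abs_max_sub_max_le_abs _ _ _
    _ ≤ max |u - v| |ε - ε| := abs_min_sub_min_le_max _ _ _ _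
    _ = |u - v| := by simp

lemma clampE_gap {ε τ u u' : ℝ} (hτ : 0 < τ) (hε : 4*τ ≤ ε) (hu : u ∈ Icc 0 ε)
    (hu' : u' ∈ Icc 0 ε) (hd : |u - u'| ≤ τ/8) :
    τ ≤ clampE ε (u+τ) - clampE ε (u'-τ) := by
  obtain ⟨hu0, hu1⟩ := hu
  obtain ⟨hu'0, hu'1⟩ := hu'
  have habs := abs_le.mp hd
  have h1 : clampE ε (u'-τ) = max 0 (u'-τ) := by
    unfold clampE; rw [min_eq_left (by linarith)]
  have h2 : clampE ε (u+τ) = min (u+τ) ε := by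
    unfold clampE
    exact max_eq_right (le_min (by linarith) (by linarith))
  rw [h1, h2]
  rcases le_total (u+τ) ε with h3 | h3 <;> rcases le_total 0 (u'-τ) with h4 | h4 <;>
    simp only [min_eq_left, min_eq_right, max_eq_left, max_eq_right, h3, h4] <;> linarith [habs.1, habs.2]


def baseY (ya dy : ℝ) (n i : ℕ) : ℝ := ya + ((i:ℝ)/(n:ℝ)) * dy

def yseq (ε ya yb dy : ℝ) (n : ℕ) (t : ℝ) (i : ℕ) : ℝ :=
  if i = 0 then ya else if i = n then yb else clampE ε (baseY ya dy n i + (-1)^i * t)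

def wasteW (ε ya yb dy : ℝ) (n : ℕ) (t : ℝ) : ℝ :=
  ∑ i ∈ Finset.range n,
    (1 - Real.sqrt (1 - (yseq ε ya yb dy n t (i+1) - yseq ε ya yb dy n t i)^2))

variable {ε ya yb dy : ℝ} {n : ℕ}

lemma baseY_diff (hn : n ≠ 0) (i : ℕ) :
    baseY ya dy n (i+1) - baseY ya dy n i = dy / n := by
  have : (n:ℝ) ≠ 0 := Nat.cast_ne_zero.mpr hn
  unfold baseY
  field_simp
  push_cast; ring

lemma baseY_mem (hya : ya ∈ Icc 0 ε) (hyb : yb ∈ Icc 0 ε) (hΔ : yb = ya + dy)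
    (hn : n ≠ 0) {i : ℕ} (hi : i ≤ n) : baseY ya dy n i ∈ Icc 0 ε := by
  have hn' : (0:ℝ) < n := Nat.cast_pos.mpr (Nat.pos_of_ne_zero hn)
  have h1 : (0:ℝ) ≤ (i:ℝ)/(n:ℝ) := by positivity
  have h2 : (i:ℝ)/(n:ℝ) ≤ 1 := by
    rw [div_le_one hn']
    exact_mod_cast hi
  have key : baseY ya dy n i = (1 - (i:ℝ)/(n:ℝ)) * ya + ((i:ℝ)/(n:ℝ)) * yb := by
    rw [hΔ]; unfold baseY; ring
  constructor
  · rw [key]; nlinarith [hya.1, hyb.1]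
  · rw [key]; nlinarith [hya.2, hyb.2]

lemma baseY_last (hn : n ≠ 0) (hΔ : yb = ya + dy) : baseY ya dy n n = yb := by
  have : (n:ℝ) ≠ 0 := Nat.cast_ne_zero.mpr hn
  unfold baseY
  rw [div_self this, hΔ]; ring

lemma yseq_mem (hε : 0 ≤ ε) (hya : ya ∈ Icc 0 ε) (hyb : yb ∈ Icc 0 ε) (t : ℝ) (i : ℕ) :
    yseq ε ya yb dy n t i ∈ Icc 0 ε := by
  unfold yseq
  split_ifs <;> first | exact hya | exact hyb | exact clampE_mem hε _

lemma yseq_diff_le (hya : ya ∈ Icc 0 ε) (hyb : yb ∈ Icc 0 ε) (hΔ : yb = ya + dy)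
    (hn : 3 ≤ n) (t : ℝ) {i : ℕ} (hi : i < n) :
    |yseq ε ya yb dy n t (i+1) - yseq ε ya yb dy n t i| ≤ |dy|/n + 2*|t| := by
  have hn0 : n ≠ 0 := by omega
  have habs : ∀ u v : ℝ, |clampE ε u - clampE ε v| ≤ |u - v| := clampE_lip ε
  have hdn : |dy/(n:ℝ)| = |dy|/n := by
    rw [abs_div, Nat.abs_cast]
  by_cases h0 : i = 0
  · subst h0
    have h1n : 1 ≠ n := by omega
    simp only [yseq, if_pos rfl, if_neg (Nat.one_ne_zero), if_neg h1n]
    calc |clampE ε (baseY ya dy n 1 + (-1)^1 * t) - ya|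
        = |clampE ε (baseY ya dy n 1 + (-1)^1 * t) - clampE ε ya| := by
          rw [clampE_eq_self hya]
      _ ≤ |(baseY ya dy n 1 + (-1)^1 * t) - ya| := habs _ _
      _ = |dy/n + (-t)| := by
          rw [show baseY ya dy n 1 + (-1)^1 * t - ya =
            (baseY ya dy n (0+1) - baseY ya dy n 0) + (-t) by unfold baseY; push_cast; ring,
            baseY_diff hn0]
      _ ≤ |dy/(n:ℝ)| + |(-t)| := abs_add_le _ _
      _ ≤ |dy|/n + 2*|t| := by rw [hdn, abs_neg]; linarith [abs_nonneg t]
  · by_cases h1 : i + 1 = n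
    · -- last step
      simp only [yseq, if_neg (by omega : i+1 ≠ 0), if_pos h1, if_neg h0, if_neg (by omega : i ≠ n)]
      calc |yb - clampE ε (baseY ya dy n i + (-1)^i * t)|
          = |clampE ε yb - clampE ε (baseY ya dy n i + (-1)^i * t)| := by
            rw [clampE_eq_self hyb]
        _ ≤ |yb - (baseY ya dy n i + (-1)^i * t)| := habs _ _
        _ = |dy/n + (-((-1)^i * t))| := by
            rw [show yb - (baseY ya dy n i + (-1)^i * t) =
              (baseY ya dy n (i+1) - baseY ya dy n i) + (-((-1)^i*t)) by
                rw [h1, baseY_last hn0 hΔ]; ring, baseY_diff hn0]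
        _ ≤ |dy/(n:ℝ)| + |(-((-1)^i*t))| := abs_add_le _ _
        _ ≤ |dy|/n + 2*|t| := by
            rw [hdn, abs_neg, abs_mul, abs_pow, abs_neg, abs_one, one_pow, one_mul]
            linarith [abs_nonneg t]
    · -- middle step
      simp only [yseq, if_neg (by omega : i+1 ≠ 0), if_neg h1, if_neg h0, if_neg (by omega : i ≠ n)]
      calc |clampE ε (baseY ya dy n (i+1) + (-1)^(i+1) * t) - clampE ε (baseY ya dy n i + (-1)^i * t)|
          ≤ |(baseY ya dy n (i+1) + (-1)^(i+1) * t) - (baseY ya dy n i + (-1)^i * t)| := habs _ _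
        _ = |dy/n + ((-1)^(i+1) - (-1)^i) * t| := by
            rw [show (baseY ya dy n (i+1) + (-1)^(i+1) * t) - (baseY ya dy n i + (-1)^i * t)
              = (baseY ya dy n (i+1) - baseY ya dy n i) + ((-1)^(i+1) - (-1)^i) * t by ring,
              baseY_diff hn0]
        _ ≤ |dy/(n:ℝ)| + |((-1)^(i+1) - (-1)^i) * t| := abs_add_le _ _
        _ ≤ |dy|/n + 2*|t| := by
            rw [hdn, abs_mul]
            have : |((-1:ℝ))^(i+1) - (-1)^i| = 2 := by
              rcases Nat.even_or_odd i with he | ho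
              · rw [he.neg_one_pow, (Even.add_one he).neg_one_pow]; norm_num
              · rw [ho.neg_one_pow, (Odd.add_one ho).neg_one_pow]; norm_num
            rw [this]

lemma yseq_zero (hya : ya ∈ Icc 0 ε) (hyb : yb ∈ Icc 0 ε) (hΔ : yb = ya + dy)
    (hn : n ≠ 0) {i : ℕ} (hi : i ≤ n) : yseq ε ya yb dy n 0 i = baseY ya dy n i := by
  unfold yseq
  split_ifs with h1 h2
  · subst h1; unfold baseY; simp
  · subst h2; exact (baseY_last hn hΔ).symm
  · rw [mul_zero, add_zero]
    exact clampE_eq_self (baseY_mem hya hyb hΔ hn hi)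

lemma wasteW_zero (hya : ya ∈ Icc 0 ε) (hyb : yb ∈ Icc 0 ε) (hΔ : yb = ya + dy)
    (hn : n ≠ 0) :
    wasteW ε ya yb dy n 0 = n * (1 - Real.sqrt (1 - (dy/n)^2)) := by
  unfold wasteW
  rw [Finset.sum_congr rfl (fun i hi => ?_), Finset.sum_const, Finset.card_range,
    nsmul_eq_mul]
  rw [Finset.mem_range] at hi
  rw [yseq_zero hya hyb hΔ hn (by omega), yseq_zero hya hyb hΔ hn (by omega),
    baseY_diff hn]

lemma wasteW_nonneg (t : ℝ) (i : ℕ) :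
    0 ≤ 1 - Real.sqrt (1 - (yseq ε ya yb dy n t (i+1) - yseq ε ya yb dy n t i)^2) := by
  have h := Real.sqrt_le_one (x := 1 - (yseq ε ya yb dy n t (i+1) - yseq ε ya yb dy n t i)^2)
    |>.mpr (by nlinarith [sq_nonneg (yseq ε ya yb dy n t (i+1) - yseq ε ya yb dy n t i)])
  linarith

lemma wasteW_tau {τ : ℝ} (hτ : 0 < τ) (hτ1 : τ ≤ 1) (hτε : 4*τ ≤ ε)
    (hya : ya ∈ Icc 0 ε) (hyb : yb ∈ Icc 0 ε) (hΔ : yb = ya + dy)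
    (hn : 3 ≤ n) (hdy : |dy|/n ≤ τ/8) :
    ((n:ℝ) - 2) * (τ^2/2) ≤ wasteW ε ya yb dy n τ := by
  have hn0 : n ≠ 0 := by omega
  have key : ∀ i ∈ Finset.Ico 1 (n-1), τ^2/2 ≤
      1 - Real.sqrt (1 - (yseq ε ya yb dy n τ (i+1) - yseq ε ya yb dy n τ i)^2) := by
    intro i hi
    rw [Finset.mem_Ico] at hi
    obtain ⟨hi1, hi2⟩ := hi
    set v := yseq ε ya yb dy n τ (i+1) - yseq ε ya yb dy n τ i with hv
    clear_value v
    have hbm : baseY ya dy n i ∈ Icc 0 ε := baseY_mem hya hyb hΔ hn0 (by omega)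
    have hbm' : baseY ya dy n (i+1) ∈ Icc 0 ε := baseY_mem hya hyb hΔ hn0 (by omega)
    have hbd : |baseY ya dy n (i+1) - baseY ya dy n i| ≤ τ/8 := by
      rw [baseY_diff hn0, abs_div, Nat.abs_cast]
      exact hdy
    have hbd' : |baseY ya dy n i - baseY ya dy n (i+1)| ≤ τ/8 := by
      rw [abs_sub_comm]; exact hbd
    have hvabs : τ ≤ |v| := by
      have e1 : yseq ε ya yb dy n τ i = clampE ε (baseY ya dy n i + (-1)^i * τ) := by
        unfold yseq
        rw [if_neg (by omega : i ≠ 0), if_neg (by omega : i ≠ n)]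
      have e2 : yseq ε ya yb dy n τ (i+1) = clampE ε (baseY ya dy n (i+1) + (-1)^(i+1) * τ) := by
        unfold yseq
        rw [if_neg (by omega : i+1 ≠ 0), if_neg (by omega : i+1 ≠ n)]
      rcases Nat.even_or_odd i with he | ho
      · have s1 : ((-1:ℝ))^i = 1 := he.neg_one_pow
        have s2 : ((-1:ℝ))^(i+1) = -1 := (Even.add_one he).neg_one_pow
        have hgap := clampE_gap hτ hτε hbm hbm' hbd'
        refine le_abs.mpr (Or.inr ?_)
        have heq : baseY ya dy n i + 1 * τ = baseY ya dy n i + τ := by ring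
        have heq2 : baseY ya dy n (i+1) + (-1) * τ = baseY ya dy n (i+1) - τ := by ring
        rw [hv, e1, e2, s1, s2, heq, heq2]
        linarith
      · have s1 : ((-1:ℝ))^i = -1 := ho.neg_one_pow
        have s2 : ((-1:ℝ))^(i+1) = 1 := (Odd.add_one ho).neg_one_pow
        have hgap := clampE_gap hτ hτε hbm' hbm hbd
        refine le_abs.mpr (Or.inl ?_)
        have heq : baseY ya dy n (i+1) + 1 * τ = baseY ya dy n (i+1) + τ := by ring
        have heq2 : baseY ya dy n i + (-1) * τ = baseY ya dy n i - τ := by ring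
        rw [hv, e1, e2, s1, s2, heq, heq2]
        linarith [hgap]
    have hsq : τ^2 ≤ v^2 := by
      have := sq_abs v
      nlinarith [abs_nonneg v]
    have hs : Real.sqrt (1 - v^2) ≤ 1 - τ^2/2 := by
      have h1 : 1 - v^2 ≤ (1 - τ^2/2)^2 := by
        have he : (1 - τ^2/2)^2 = 1 - τ^2 + (τ^2)^2/4 := by ring
        rw [he]
        have := sq_nonneg (τ^2)
        linarith
      calc Real.sqrt (1 - v^2) ≤ Real.sqrt ((1 - τ^2/2)^2) := Real.sqrt_le_sqrt h1
        _ = 1 - τ^2/2 := Real.sqrt_sq (by nlinarith)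
    linarith
  calc ((n:ℝ) - 2) * (τ^2/2)
      = ((Finset.Ico 1 (n-1)).card : ℝ) * (τ^2/2) := by
        rw [Nat.card_Ico]
        congr 1
        have : n - 1 - 1 = n - 2 := by omega
        rw [this, Nat.cast_sub (by omega)]
        norm_num
    _ ≤ ∑ i ∈ Finset.Ico 1 (n-1),
        (1 - Real.sqrt (1 - (yseq ε ya yb dy n τ (i+1) - yseq ε ya yb dy n τ i)^2)) := by
        have := Finset.card_nsmul_le_sum (Finset.Ico 1 (n-1))
          (fun i => 1 - Real.sqrt (1 - (yseq ε ya yb dy n τ (i+1) - yseq ε ya yb dy n τ i)^2))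
          (τ^2/2) key
        rwa [nsmul_eq_mul] at this
    _ ≤ wasteW ε ya yb dy n τ := by
        apply Finset.sum_le_sum_of_subset_of_nonneg
        · intro i hi
          rw [Finset.mem_Ico] at hi
          rw [Finset.mem_range]
          omega
        · intro i _ _
          exact wasteW_nonneg τ i

lemma wasteW_cont : Continuous (wasteW ε ya yb dy n) := by
  unfold wasteW
  apply continuous_finset_sum
  intro i _
  have hy : ∀ j, Continuous (fun t => yseq ε ya yb dy n t j) := by
    intro j
    unfold yseq clampE
    split_ifs
    · exact continuous_const
    · exact continuous_const
    · fun_prop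
  fun_prop
lemma walk_of_chain {V : Type*} (G : SimpleGraph V) (f : ℕ → V) :
    ∀ n : ℕ, (∀ i, i < n → G.Adj (f i) (f (i+1))) →
      ∃ w : G.Walk (f 0) (f n), w.length = n := by
  intro n
  induction n with
  | zero => exact fun _ => ⟨SimpleGraph.Walk.nil, rfl⟩
  | succ m ih =>
    intro h
    obtain ⟨w, hw⟩ := ih (fun i hi => h i (by omega))
    exact ⟨w.concat (h m (by omega)), by rw [SimpleGraph.Walk.length_concat, hw]⟩

lemma dist_le_length {ε : ℝ} {a b : Strip ε} (w : (stripGraph ε).Walk a b) :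
    dist a.1 b.1 ≤ w.length := by
  induction w with
  | nil => simp
  | @cons u x y h p ih =>
    have : dist u.1 x.1 = 1 := h
    calc dist u.1 y.1 ≤ dist u.1 x.1 + dist x.1 y.1 := dist_triangle _ _ _
      _ ≤ 1 + p.length := by rw [this]; linarith
      _ = (p.cons h).length := by rw [SimpleGraph.Walk.length_cons]; push_cast; ring

def mk2 (x y : ℝ) : EuclideanSpace ℝ (Fin 2) := WithLp.toLp 2 ![x, y]

lemma mk2_zero (x y : ℝ) : mk2 x y 0 = x := rfl
lemma mk2_one (x y : ℝ) : mk2 x y 1 = y := rfl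

lemma dist_sq (A B : EuclideanSpace ℝ (Fin 2)) :
    dist A B = Real.sqrt ((A 0 - B 0)^2 + (A 1 - B 1)^2) := by
  rw [EuclideanSpace.dist_eq, Fin.sum_univ_two]
  rw [Real.dist_eq, Real.dist_eq, sq_abs, sq_abs]

lemma coord_le_dist (A B : EuclideanSpace ℝ (Fin 2)) (j : Fin 2) :
    |A j - B j| ≤ dist A B := by
  rw [dist_sq]
  fin_cases j
  · calc |A 0 - B 0| = Real.sqrt ((A 0 - B 0)^2) := (Real.sqrt_sq_eq_abs _).symm
      _ ≤ _ := Real.sqrt_le_sqrt (by nlinarith [sq_nonneg (A 1 - B 1)])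
  · calc |A 1 - B 1| = Real.sqrt ((A 1 - B 1)^2) := (Real.sqrt_sq_eq_abs _).symm
      _ ≤ _ := Real.sqrt_le_sqrt (by nlinarith [sq_nonneg (A 0 - B 0)])

lemma eq_mk2 (A : EuclideanSpace ℝ (Fin 2)) : A = mk2 (A 0) (A 1) := by
  ext j
  fin_cases j <;> rfl


def cConst (ε : ℝ) : ℝ := 1600/(min ε 1)^2 + 100*(ε+1)^2

lemma cConst_pos {ε : ℝ} (hε : 0 < ε) : 0 < cConst ε := by
  have : 0 < min ε 1 := lt_min hε one_pos
  unfold cConst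
  positivity

set_option maxHeartbeats 2000000 in
lemma construction (ε : ℝ) (hε : 0 < ε) (a b : Strip ε) (hx : a.1 0 ≤ b.1 0)
    (hd : dist a.1 b.1 > cConst ε) :
    ∃ w : (stripGraph ε).Walk a b, w.length = ⌈dist a.1 b.1⌉₊ := by
  set A := a.1 with hA
  set B := b.1 with hB
  set d := dist A B with hdd
  set n := ⌈d⌉₊ with hn
  set m := min ε 1 with hm
  set τ := m/4 with hτ
  set ya := A 1 with hya'
  set yb := B 1 with hyb'
  set dy := yb - ya with hdy'
  set dx := B 0 - A 0 with hdx'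
  have hm0 : 0 < m := lt_min hε one_pos
  have hm1 : m ≤ 1 := min_le_right _ _
  have hmε : m ≤ ε := min_le_left _ _
  have hτ0 : 0 < τ := by positivity
  have hτ1 : τ ≤ 1 := by rw [hτ]; linarith
  have hτε : 4*τ ≤ ε := by rw [hτ]; linarith
  have hya : ya ∈ Icc 0 ε := a.2
  clear_value m τ
  have hyb : yb ∈ Icc 0 ε := b.2
  have hΔ : yb = ya + dy := by rw [hdy']; ring
  have hcd : cConst ε < d := hd
  have hc100 : (100:ℝ) ≤ cConst ε := by
    have h1 : (0:ℝ) < 1600/m^2 := by positivity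
    have h2 : (100:ℝ) ≤ 100*(ε+1)^2 := by nlinarith
    unfold cConst; rw [← hm]; linarith
  have hd0 : (0:ℝ) < d := by linarith
  have hdn : d ≤ (n:ℝ) := Nat.le_ceil d
  have hn1 : (n:ℝ) < d + 1 := Nat.ceil_lt_add_one hd0.le
  have hn3 : 3 ≤ n := by
    have : (3:ℝ) ≤ (n:ℝ) := by linarith
    exact_mod_cast this
  have hn0 : n ≠ 0 := by omega
  have hn0' : (0:ℝ) < (n:ℝ) := by positivity
  have hdsq : d^2 = dx^2 + dy^2 := by
    have h1 : d = Real.sqrt (dx^2 + dy^2) := by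
      rw [hdd, dist_sq]
      congr 1
      rw [hdx', hdy', hya', hyb']
      ring
    rw [h1, Real.sq_sqrt (by positivity)]
  have hdx0 : (0:ℝ) ≤ dx := by rw [hdx']; linarith
  have hdyε : |dy| ≤ ε := by
    rw [abs_le]
    constructor
    · rw [hdy']; linarith [hya.2, hyb.1]
    · rw [hdy']; linarith [hya.1, hyb.2]
  have hdxd : dx ≤ d := by
    have h1 : dx = Real.sqrt (dx^2) := (Real.sqrt_sq hdx0).symm
    have h2 : d = Real.sqrt (d^2) := (Real.sqrt_sq hd0.le).symm
    rw [h1, h2]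
    apply Real.sqrt_le_sqrt
    nlinarith [sq_nonneg dy]
  clear_value d ya yb dy dx
  -- N2 : |dy|/n ≤ τ/8
  have hN2 : |dy|/(n:ℝ) ≤ τ/8 := by
    have key : 32*ε ≤ m * cConst ε := by
      unfold cConst
      rw [← hm]
      rcases le_total ε 1 with h | h
      · have hme : m = ε := hm.trans (min_eq_left h)
        rw [hme]
        have e1 : ε * (1600/ε^2) = 1600/ε := by field_simp
        have e2 : (1600:ℝ) ≤ 1600/ε := by
          rw [le_div_iff₀ hε]; nlinarith
        have e3 : (0:ℝ) ≤ ε*(100*(ε+1)^2) := by positivity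
        calc 32*ε ≤ 1600 := by nlinarith
          _ ≤ ε * (1600/ε^2) := by rw [e1]; exact e2
          _ ≤ ε * (1600/ε^2 + 100*(ε+1)^2) := by nlinarith
      · have hme : m = 1 := hm.trans (min_eq_right h)
        rw [hme, one_mul]
        have h1 : (0:ℝ) ≤ 1600/(1:ℝ)^2 := by norm_num
        nlinarith
    have h2 : m * cConst ε ≤ m * (n:ℝ) :=
      mul_le_mul_of_nonneg_left (by linarith) hm0.le
    rw [div_le_div_iff₀ hn0' (by norm_num : (0:ℝ) < 8)]
    have : τ = m/4 := hτ
    rw [this]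
    have h3 : 32*|dy| ≤ 32*ε := by linarith
    calc |dy| * 8 = (32*|dy|)/4 := by ring
      _ ≤ (m*(n:ℝ))/4 := by linarith
      _ = m/4 * (n:ℝ) := by ring
  -- N3 : D bounds
  set D := (n:ℝ) - dx with hD
  have hD0 : 0 ≤ D := by rw [hD]; linarith
  have hεd : ε^2 ≤ d - 1/4 := by
    have : ε^2 + 1 ≤ cConst ε := by
      unfold cConst
      rw [← hm]
      have h1 : (0:ℝ) < 1600/m^2 := by positivity
      nlinarith
    linarith
  have hdxlb : d - 1/2 ≤ dx := by
    have h1 : (d-1/2)^2 ≤ dx^2 := by nlinarith [sq_abs dy, hdyε, abs_nonneg dy]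
    calc d - 1/2 = Real.sqrt ((d-1/2)^2) := (Real.sqrt_sq (by linarith)).symm
      _ ≤ Real.sqrt (dx^2) := Real.sqrt_le_sqrt h1
      _ = dx := Real.sqrt_sq hdx0
  have hD32 : D ≤ 3/2 := by rw [hD]; linarith
  -- N4 : W 0 ≤ D
  have hW0 : wasteW ε ya yb dy n 0 ≤ D := by
    rw [wasteW_zero hya hyb hΔ hn0]
    have h1 : dx ≤ (n:ℝ) * Real.sqrt (1 - (dy/(n:ℝ))^2) := by
      have e1 : (n:ℝ) * Real.sqrt (1 - (dy/(n:ℝ))^2) = Real.sqrt ((n:ℝ)^2 - dy^2) := by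
        rw [show ((n:ℝ)^2 - dy^2) = (n:ℝ)^2 * (1 - (dy/(n:ℝ))^2) by field_simp,
          Real.sqrt_mul (by positivity), Real.sqrt_sq hn0'.le]
      rw [e1]
      calc dx = Real.sqrt (dx^2) := (Real.sqrt_sq hdx0).symm
        _ ≤ Real.sqrt ((n:ℝ)^2 - dy^2) := Real.sqrt_le_sqrt (by nlinarith)
    rw [hD]
    nlinarith
  -- N5 : D ≤ W τ
  have hWτ : D ≤ wasteW ε ya yb dy n τ := by
    have h48 : 48/m^2 + 2 ≤ (n:ℝ) := by
      have h1 : 48/m^2 + 1552 ≤ 1600/m^2 := by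
        rw [div_add' _ _ _ (by positivity), div_le_div_iff₀ (by positivity) (by positivity)]
        have hm2 : m^2 ≤ 1 := by nlinarith
        nlinarith [mul_nonneg (sq_nonneg m) (by linarith : (0:ℝ) ≤ 1 - m^2)]
      have h2 : cConst ε ≤ (n:ℝ) := by linarith
      have h3 : (100:ℝ) ≤ 100*(ε+1)^2 := by nlinarith
      unfold cConst at h2
      rw [← hm] at h2
      linarith
    have key := wasteW_tau hτ0 hτ1 hτε hya hyb hΔ hn3 hN2
    have h2 : 3/2 ≤ ((n:ℝ) - 2) * (τ^2/2) := by
      have hτ2 : τ^2 = m^2/16 := by rw [hτ]; ring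
      have h3 : 48/m^2 ≤ (n:ℝ) - 2 := by linarith
      have h4 : (48/m^2) * (m^2/32) = 3/2 := by field_simp; norm_num
      calc (3:ℝ)/2 = (48/m^2) * (m^2/32) := h4.symm
        _ ≤ ((n:ℝ)-2) * (m^2/32) := by
            apply mul_le_mul_of_nonneg_right h3 (by positivity)
        _ = ((n:ℝ)-2) * (τ^2/2) := by rw [hτ2]; ring
    linarith
  -- IVT
  obtain ⟨t, ht, hWt⟩ := intermediate_value_Icc hτ0.le
    (wasteW_cont (ε := ε) (ya := ya) (yb := yb) (dy := dy) (n := n)).continuousOn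
    (⟨hW0, hWτ⟩ : D ∈ Icc (wasteW ε ya yb dy n 0) (wasteW ε ya yb dy n τ))
  -- the path
  set Y : ℕ → ℝ := yseq ε ya yb dy n t with hY
  set v : ℕ → ℝ := fun i => Y (i+1) - Y i with hv
  have hvb : ∀ i, i < n → (v i)^2 ≤ 1 := by
    intro i hi
    have h1 := yseq_diff_le hya hyb hΔ hn3 t hi
    have h2 : |t| ≤ τ := by
      rw [abs_of_nonneg ht.1]; exact ht.2
    have h3 : |v i| ≤ 1 := by
      have : |v i| ≤ |dy|/n + 2*|t| := h1
      calc |v i| ≤ |dy|/n + 2*|t| := this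
        _ ≤ τ/8 + 2*τ := by linarith
        _ ≤ 1 := by linarith
    nlinarith [abs_nonneg (v i), sq_abs (v i)]
  set X : ℕ → ℝ := fun i => A 0 + ∑ j ∈ Finset.range i, Real.sqrt (1 - (v j)^2) with hX
  have hXsucc : ∀ i, X (i+1) = X i + Real.sqrt (1 - (v i)^2) := by
    intro i
    rw [hX]
    simp only
    rw [Finset.sum_range_succ]
    ring
  set P : ℕ → EuclideanSpace ℝ (Fin 2) := fun i => mk2 (X i) (Y i) with hP
  have hPs : ∀ i, P i ∈ Strip ε := by
    intro i
    show P i 1 ∈ Icc 0 ε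
    rw [hP]
    simp only
    rw [mk2_one]
    exact yseq_mem hε.le hya hyb t i
  set Q : ℕ → Strip ε := fun i => ⟨P i, hPs i⟩ with hQ
  have hadj : ∀ i, i < n → (stripGraph ε).Adj (Q i) (Q (i+1)) := by
    intro i hi
    show dist (P i) (P (i+1)) = 1
    rw [dist_sq, hP]
    simp only
    rw [mk2_zero, mk2_zero, mk2_one, mk2_one, hXsucc i]
    have h1 : (X i - (X i + Real.sqrt (1 - (v i)^2)))^2 = 1 - (v i)^2 := by
      rw [show X i - (X i + Real.sqrt (1 - (v i)^2)) = -(Real.sqrt (1 - (v i)^2)) by ring,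
        neg_pow, Real.sq_sqrt (by linarith [hvb i hi])]
      ring
    have h2 : (Y i - Y (i+1))^2 = (v i)^2 := by
      rw [hv]; ring
    rw [h1, h2]
    rw [show 1 - (v i)^2 + (v i)^2 = 1 by ring, Real.sqrt_one]
  have hQ0 : Q 0 = a := by
    rw [hQ]
    apply Subtype.ext
    simp only
    rw [hP]
    simp only
    have h1 : X 0 = A 0 := by rw [hX]; simp
    have h2 : Y 0 = A 1 := by rw [hY]; unfold yseq; rw [if_pos rfl]; exact hya'
    rw [h1, h2, ← eq_mk2]
  have hQn : Q n = b := by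
    rw [hQ]
    apply Subtype.ext
    simp only
    rw [hP]
    simp only
    have h2 : Y n = B 1 := by
      rw [hY]; unfold yseq; rw [if_neg hn0, if_pos rfl]; exact hyb'
    have hsum : ∑ j ∈ Finset.range n, Real.sqrt (1 - (v j)^2)
        = (n:ℝ) - wasteW ε ya yb dy n t := by
      unfold wasteW
      rw [Finset.sum_sub_distrib, Finset.sum_const, Finset.card_range, nsmul_eq_mul,
        mul_one]
      ring
    have h1 : X n = B 0 := by
      rw [hX]
      simp only
      rw [hsum, hWt, hD, hdx']
      ring
    rw [h1, h2, ← eq_mk2]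
  obtain ⟨w, hw⟩ := walk_of_chain (stripGraph ε) Q n hadj
  exact ⟨w.copy hQ0 hQn, by rw [SimpleGraph.Walk.length_copy, hw]⟩


lemma far_dist (ε : ℝ) (hε : 0 < ε) (a b : Strip ε) (hab : dist a.1 b.1 > cConst ε) :
    (stripGraph ε).dist a b = ⌈dist a.1 b.1⌉₊ := by
  have hwalk : ∃ w : (stripGraph ε).Walk a b, w.length = ⌈dist a.1 b.1⌉₊ := by
    rcases le_total (a.1 0) (b.1 0) with h | h
    · exact construction ε hε a b h hab
    · obtain ⟨w, hw⟩ := construction ε hε b a h (by rwa [dist_comm])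
      refine ⟨w.reverse, ?_⟩
      rw [SimpleGraph.Walk.length_reverse, hw, dist_comm]
  obtain ⟨w, hw⟩ := hwalk
  have hub : (stripGraph ε).dist a b ≤ ⌈dist a.1 b.1⌉₊ := hw ▸ SimpleGraph.dist_le w
  have hreach : (stripGraph ε).Reachable a b := w.reachable
  obtain ⟨w0, hw0⟩ := hreach.exists_walk_length_eq_dist
  have hlb : dist a.1 b.1 ≤ ((stripGraph ε).dist a b : ℝ) := by
    have := dist_le_length w0
    rw [hw0] at this
    exact this
  exact le_antisymm hub (Nat.ceil_le.mpr hlb)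

lemma far_reach (ε : ℝ) (hε : 0 < ε) (a b : Strip ε) (hx : a.1 0 ≤ b.1 0)
    (hab : dist a.1 b.1 > cConst ε) : (stripGraph ε).Reachable a b := by
  obtain ⟨w, _⟩ := construction ε hε a b hx hab
  exact w.reachable

lemma strip_connected (ε : ℝ) (hε : 0 < ε) : (stripGraph ε).Connected := by
  have hz : ∀ M : ℝ, mk2 M 0 ∈ Strip ε := by
    intro M
    show (mk2 M 0) 1 ∈ Icc 0 ε
    rw [mk2_one]
    exact ⟨le_refl 0, hε.le⟩
  rw [SimpleGraph.connected_iff]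
  refine ⟨?_, ⟨⟨mk2 0 0, hz 0⟩⟩⟩
  intro a b
  set M := max (a.1 0) (b.1 0) + cConst ε + 1 with hM
  set z : Strip ε := ⟨mk2 M 0, hz M⟩ with hzdef
  have hc0 := cConst_pos hε
  have haM : a.1 0 ≤ M := by
    have := le_max_left (a.1 0) (b.1 0)
    rw [hM]; linarith
  have hbM : b.1 0 ≤ M := by
    have := le_max_right (a.1 0) (b.1 0)
    rw [hM]; linarith
  have hdist : ∀ p : Strip ε, p.1 0 ≤ M → max (a.1 0) (b.1 0) + cConst ε + 1 ≤ M →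
      p.1 0 ≤ max (a.1 0) (b.1 0) → dist p.1 z.1 > cConst ε := by
    intro p hpM _ hpmax
    have h1 : |p.1 0 - z.1 0| ≤ dist p.1 z.1 := coord_le_dist _ _ 0
    have h2 : z.1 0 = M := mk2_zero M 0
    have h3 : |p.1 0 - M| = M - p.1 0 := by
      rw [abs_of_nonpos (by linarith)]; ring
    rw [h2, h3] at h1
    have : M - p.1 0 ≥ cConst ε + 1 := by rw [hM]; linarith
    linarith
  have hra : (stripGraph ε).Reachable a z :=
    far_reach ε hε a z (by rw [show z.1 0 = M from mk2_zero M 0]; exact haM)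
      (hdist a haM (le_of_eq hM.symm) (le_max_left _ _))
  have hrb : (stripGraph ε).Reachable b z :=
    far_reach ε hε b z (by rw [show z.1 0 = M from mk2_zero M 0]; exact hbM)
      (hdist b hbM (le_of_eq hM.symm) (le_max_right _ _))
  exact hra.trans hrb.symm


end StripAux

/-- There is a constant `c = c(ε) > 0` such that any two points of the strip at Euclidean
distance greater than `c` are at graph distance `⌈‖a - b‖⌉` in the unit distance graph;
in particular the unit distance graph of the strip is connected. -/
theorem strip_graphDist_eq_ceil (ε : ℝ) (hε : 0 < ε) :
    ∃ c : ℝ, 0 < c ∧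
      (∀ a b : Strip ε, dist a.1 b.1 > c →
        (stripGraph ε).dist a b = ⌈dist a.1 b.1⌉₊) ∧
      (stripGraph ε).Connected := by
  exact ⟨StripAux.cConst ε, StripAux.cConst_pos hε,
    fun a b hab => StripAux.far_dist ε hε a b hab,
    StripAux.strip_connected ε hε⟩
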